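/- Let A be a real symmetric invertible 2m×2m matrix such that 𝕁_m A is hyperbolic. Then A has signature (m, m): counted with multiplicity, A has exactly m positive eigenvalues and exactly m negative eigenvalues. -/

import Mathlib

/-!
Since `Aᵀ = A` and `𝕁ᵀ = -𝕁`, the matrix `B = 𝕁 A` is skew-adjoint for the sesquilinear form
`h(x, y) = xᵀ A ȳ` on `ℂ^{2m}`, so generalized eigenspaces of `B` for eigenvalues `μ`, `ν` are
`h`-orthogonal unless `μ + ν̄ = 0`. As `B` is hyperbolic, `ℂ^{2m}` is the sum of the subspaces
`E₋`, `E₊` belonging to the eigenvalues with negative, resp. positive, real part, and both are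
`h`-isotropic. The complex span of the eigenvectors of `A` with eigenvalues of one sign meets an
isotropic subspace trivially, so `#pos + dim E± ≤ 2m` and `#neg + dim E± ≤ 2m`. Together with
`dim E₋ + dim E₊ ≥ 2m` and `#pos + #neg = 2m` (`A` is invertible) this forces `#pos = #neg = m`.
-/

open Matrix

/-- The standard complex structure `𝕁_m` on `ℝ^{2m} = ℝ^m × ℝ^m`, as a block matrix
`[[0, I], [−I, 0]]`. -/
noncomputable def Jmat (m : ℕ) : Matrix (Fin m ⊕ Fin m) (Fin m ⊕ Fin m) ℝ :=
  Matrix.fromBlocks 0 1 (-1) 0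

/-- A real square matrix is *hyperbolic* if every complex eigenvalue of its
complexification has nonzero real part. -/
def Matrix.Hyperbolic {I : Type*} [Fintype I] (B : Matrix I I ℝ) : Prop :=
  ∀ (μ : ℂ) (w : I → ℂ), w ≠ 0 →
    (B.map (fun x => (x : ℂ))).mulVec w = μ • w → μ.re ≠ 0

open Module ComplexOrder

section Field

variable {K V : Type*} [Field K] [AddCommGroup V] [Module K V] {I : K →+* K}
  {B : V →ₗ[K] V →ₛₗ[I] K} {f : End K V}

theorem LinearMap.IsOrthoᵢ.apply_sum_smul_sum_smul {ι : Type*} [Fintype ι] {u : ι → V}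
    (hu : B.IsOrthoᵢ u) (c d : ι → K) :
    B (∑ i, c i • u i) (∑ i, d i • u i) = ∑ i, c i * I (d i) * B (u i) (u i) := by
  simp only [map_sum, map_smul, map_smulₛₗ, LinearMap.sum_apply, LinearMap.smul_apply,
    smul_eq_mul]
  refine Finset.sum_congr rfl fun i _ => ?_
  rw [Finset.sum_eq_single i (fun j _ hji => by rw [hu hji, mul_zero]) (by simp)]
  ring

theorem LinearMap.IsAdjointPair.apply_eq_zero_of_mem_maxGenEigenspace
    (hf : B.IsAdjointPair B f (-f)) {μ ν : K} (hμν : μ + I ν ≠ 0) {x y : V}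
    (hx : x ∈ f.maxGenEigenspace μ) (hy : y ∈ f.maxGenEigenspace ν) : B x y = 0 := by
  rw [End.mem_maxGenEigenspace] at hx hy
  obtain ⟨k, hk⟩ := hx
  obtain ⟨l, hl⟩ := hy
  induction k generalizing x l y with
  | zero => simp_all
  | succ k ihk =>
    induction l generalizing y with
    | zero => simp_all
    | succ l ihl =>
      have hx' : B ((f - μ • 1) x) y = 0 := ihk (by rwa [← End.mul_apply, ← pow_succ]) _ hl
      have hy' : B x ((f - ν • 1) y) = 0 := ihl (by rwa [← End.mul_apply, ← pow_succ])
      have key : B ((f - μ • 1) x) y + B x ((f - ν • 1) y) = -((μ + I ν) * B x y) := by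
        simp only [LinearMap.sub_apply, map_sub, LinearMap.smul_apply, map_smul, map_smulₛₗ,
          End.one_apply, hf x y, Pi.neg_apply, map_neg, smul_eq_mul]
        ring
      rw [hx', hy', zero_add, eq_comm, neg_eq_zero, mul_eq_zero] at key
      exact key.resolve_left hμν

theorem LinearMap.IsAdjointPair.apply_eq_zero_of_mem_biSup_maxGenEigenspace
    (hf : B.IsAdjointPair B f (-f)) {s t : Set K} (hst : ∀ μ ∈ s, ∀ ν ∈ t, μ + I ν ≠ 0)
    {x y : V} (hx : x ∈ ⨆ μ ∈ s, f.maxGenEigenspace μ)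
    (hy : y ∈ ⨆ ν ∈ t, f.maxGenEigenspace ν) : B x y = 0 := by
  suffices (⨆ μ ∈ s, f.maxGenEigenspace μ) ≤ LinearMap.ker (B.flip y) from this hx
  refine iSup₂_le fun μ hμ x hx => ?_
  suffices (⨆ ν ∈ t, f.maxGenEigenspace ν) ≤ LinearMap.ker (B x) from this hy
  exact iSup₂_le fun ν hν y hy => hf.apply_eq_zero_of_mem_maxGenEigenspace (hst μ hμ ν hν) hx hy

theorem Module.End.biSup_maxGenEigenspace_eq_top [IsAlgClosed K] [FiniteDimensional K V]
    {s : Set K} (hs : ∀ μ, f.HasEigenvalue μ → μ ∈ s) :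
    ⨆ μ ∈ s, f.maxGenEigenspace μ = ⊤ := by
  refine eq_top_iff.2 (f.iSup_maxGenEigenspace_eq_top ▸ iSup_le fun μ => ?_)
  by_cases hμ : f.HasEigenvalue μ
  · exact le_iSup₂_of_le (f := fun μ _ => f.maxGenEigenspace μ) μ (hs μ hμ) le_rfl
  · have : f.maxGenEigenspace μ = ⊥ := by
      by_contra h
      exact hμ ((hasUnifEigenvalue_iff_hasUnifEigenvalue_one (by simp)).1 h)
    simp [this]

end Field

theorem Module.End.biSup_maxGenEigenspace_re_neg_sup_re_pos_eq_top {V : Type*} [AddCommGroup V]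
    [Module ℂ V] [FiniteDimensional ℂ V] {f : End ℂ V} (hf : ∀ μ, f.HasEigenvalue μ → μ.re ≠ 0) :
    (⨆ μ ∈ {μ : ℂ | μ.re < 0}, f.maxGenEigenspace μ) ⊔
      (⨆ μ ∈ {μ : ℂ | 0 < μ.re}, f.maxGenEigenspace μ) = ⊤ := by
  rw [← iSup_union]
  exact biSup_maxGenEigenspace_eq_top fun μ hμ => (hf μ hμ).lt_or_gt

section PositiveFamily

variable {V ι : Type*} [AddCommGroup V] [Module ℂ V] [Fintype ι]
  {B : V →ₗ[ℂ] V →ₗ⋆[ℂ] ℂ} {u : ι → V}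

theorem LinearMap.IsOrthoᵢ.eq_zero_of_mem_span_of_apply_self_eq_zero (hu : B.IsOrthoᵢ u)
    (hpos : ∀ i, 0 < B (u i) (u i)) {x : V} (hx : x ∈ Submodule.span ℂ (Set.range u))
    (hxx : B x x = 0) : x = 0 := by
  obtain ⟨c, rfl⟩ := (Submodule.mem_span_range_iff_exists_fun ℂ).1 hx
  rw [hu.apply_sum_smul_sum_smul, Finset.sum_eq_zero_iff_of_nonneg] at hxx
  · refine Finset.sum_eq_zero fun i _ => ?_
    have := hxx i (Finset.mem_univ i)
    simp_all [(hpos i).ne']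
  · intro i _
    rw [RCLike.mul_conj]
    exact mul_nonneg (by positivity) (hpos i).le

theorem LinearMap.IsOrthoᵢ.card_add_finrank_le [FiniteDimensional ℂ V] (hu : B.IsOrthoᵢ u)
    (hpos : ∀ i, 0 < B (u i) (u i)) {W : Submodule ℂ V} (hW : ∀ x ∈ W, B x x = 0) :
    Fintype.card ι + finrank ℂ W ≤ finrank ℂ V := by
  have hli : LinearIndependent ℂ u :=
    LinearMap.linearIndependent_of_isOrthoᵢ hu fun i => (hpos i).ne'
  have hdisj : Disjoint (Submodule.span ℂ (Set.range u)) W := by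
    rw [Submodule.disjoint_def]
    exact fun x hx hxW => hu.eq_zero_of_mem_span_of_apply_self_eq_zero hpos hx (hW x hxW)
  simpa [finrank_span_eq_card hli] using Submodule.finrank_add_finrank_le_of_disjoint hdisj

end PositiveFamily

namespace Matrix

variable {n : Type*} [Fintype n] [DecidableEq n]

noncomputable def toSesqForm {R : Type*} [CommSemiring R] [StarRing R] (M : Matrix n n R) :
    (n → R) →ₗ[R] (n → R) →ₗ⋆[R] R :=
  toLinearMapₛₗ₂' R (RingHom.id R) (starRingEnd R) M

theorem toSesqForm_apply {R : Type*} [CommSemiring R] [StarRing R] (M : Matrix n n R)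
    (x y : n → R) : M.toSesqForm x y = x ⬝ᵥ (M *ᵥ star y) := by
  simp only [toSesqForm, toLinearMapₛₗ₂'_apply, dotProduct, mulVec, Finset.mul_sum, smul_eq_mul,
    RingHom.id_apply, Pi.star_apply, starRingEnd_apply]
  exact Finset.sum_congr rfl fun _ _ => Finset.sum_congr rfl fun _ _ => by ring

theorem toSesqForm_map_ofReal_apply_ofReal (A : Matrix n n ℝ) (x y : n → ℝ) :
    (A.map (↑) : Matrix n n ℂ).toSesqForm (fun k => (x k : ℂ)) (fun k => (y k : ℂ)) =
      ((x ⬝ᵥ (A *ᵥ y) : ℝ) : ℂ) := by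
  simp [toSesqForm_apply, dotProduct, mulVec]

omit [DecidableEq n] in
theorem map_ofReal_mulVec_star (M : Matrix n n ℝ) (x : n → ℂ) :
    (M.map (↑) : Matrix n n ℂ) *ᵥ star x = star ((M.map (↑) : Matrix n n ℂ) *ᵥ x) := by
  ext i
  simp [mulVec, dotProduct, star_sum, mul_comm]

omit [DecidableEq n] in
theorem IsSymm.isSkewAdjoint_mul {R : Type*} [CommRing R] {A J : Matrix n n R}
    (hA : A.IsSymm) (hJ : Jᵀ = -J) : A.IsSkewAdjoint (J * A) := by
  rw [Matrix.IsSkewAdjoint, Matrix.IsAdjointPair, transpose_mul, hJ, hA.eq]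
  noncomm_ring

theorem IsSkewAdjoint.isAdjointPair_toSesqForm_map_ofReal {A M : Matrix n n ℝ}
    (h : A.IsSkewAdjoint M) :
    (A.map (↑) : Matrix n n ℂ).toSesqForm.IsAdjointPair (A.map (↑) : Matrix n n ℂ).toSesqForm
      (toLin' (M.map (↑) : Matrix n n ℂ)) (-toLin' (M.map (↑) : Matrix n n ℂ)) := by
  set Ac : Matrix n n ℂ := A.map (↑)
  set Mc : Matrix n n ℂ := M.map (↑)
  have hc : Mcᵀ * Ac = Ac * -Mc := by
    have := congrArg Complex.ofRealHom.mapMatrix (show Mᵀ * A = A * -M from h)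
    simp only [map_mul, map_neg, RingHom.mapMatrix_apply] at this
    exact this
  intro x y
  simp only [toSesqForm_apply, Pi.neg_apply, toLin'_apply]
  rw [star_neg, ← map_ofReal_mulVec_star, dotProduct_comm, dotProduct_mulVec, ← mulVec_transpose,
    mulVec_mulVec, hc, ← mulVec_mulVec, dotProduct_comm, neg_mulVec, mulVec_neg]

theorem Hyperbolic.re_ne_zero {M : Matrix n n ℝ} (hM : M.Hyperbolic) {μ : ℂ}
    (hμ : End.HasEigenvalue (toLin' (M.map (↑) : Matrix n n ℂ)) μ) : μ.re ≠ 0 := by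
  obtain ⟨w, hw⟩ := hμ.exists_hasEigenvector
  exact hM μ w hw.2 (by simpa using hw.apply_eq_smul)

namespace IsHermitian

theorem eigenvalues_ne_zero {𝕜 : Type*} [RCLike 𝕜] {A : Matrix n n 𝕜}
    (hA : A.IsHermitian) (hAu : IsUnit A) (i : n) : hA.eigenvalues i ≠ 0 := by
  have := ((isUnit_iff_isUnit_det A).1 hAu).ne_zero
  rw [hA.det_eq_prod_eigenvalues, Finset.prod_ne_zero_iff] at this
  exact_mod_cast this i (Finset.mem_univ i)

theorem card_filter_pos_add_card_filter_neg {𝕜 : Type*} [RCLike 𝕜]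
    {A : Matrix n n 𝕜} (hA : A.IsHermitian) (hAu : IsUnit A) :
    (Finset.univ.filter fun i => 0 < hA.eigenvalues i).card +
      (Finset.univ.filter fun i => hA.eigenvalues i < 0).card = Fintype.card n := by
  rw [← Finset.card_univ, ← Finset.univ.card_filter_add_card_filter_not (0 < hA.eigenvalues ·)]
  congr 2
  exact Finset.filter_congr fun i _ => by simp [(hA.eigenvalues_ne_zero hAu i).le_iff_lt]

theorem dotProduct_mulVec_eigenvectorBasis {A : Matrix n n ℝ} (hA : A.IsHermitian) (i j : n) :
    (hA.eigenvectorBasis i : n → ℝ) ⬝ᵥ (A *ᵥ hA.eigenvectorBasis j) =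
      if i = j then hA.eigenvalues i else 0 := by
  have := hA.eigenvectorBasis.inner_eq_ite i j
  rw [EuclideanSpace.inner_eq_star_dotProduct, star_trivial] at this
  rw [hA.mulVec_eigenvectorBasis, dotProduct_smul, dotProduct_comm, this]
  split_ifs with h <;> simp [h]

theorem card_filter_pos_add_finrank_le {A : Matrix n n ℝ} (hA : A.IsHermitian)
    {W : Submodule ℂ (n → ℂ)} (hW : ∀ x ∈ W, (A.map (↑) : Matrix n n ℂ).toSesqForm x x = 0) :
    (Finset.univ.filter fun i => 0 < hA.eigenvalues i).card + finrank ℂ W ≤ Fintype.card n := by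
  let u : {i // 0 < hA.eigenvalues i} → n → ℂ := fun i k => (hA.eigenvectorBasis i k : ℂ)
  have key := LinearMap.IsOrthoᵢ.card_add_finrank_le (u := u) (fun i j hij => ?_) (fun i => ?_) hW
  · simpa [Fintype.card_subtype] using key
  · show _ = 0
    simp [u, toSesqForm_map_ofReal_apply_ofReal, hA.dotProduct_mulVec_eigenvectorBasis,
      Subtype.val_injective.ne hij]
  · simp [u, toSesqForm_map_ofReal_apply_ofReal, hA.dotProduct_mulVec_eigenvectorBasis, i.2]

theorem card_filter_neg_add_finrank_le {A : Matrix n n ℝ} (hA : A.IsHermitian)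
    {W : Submodule ℂ (n → ℂ)} (hW : ∀ x ∈ W, (A.map (↑) : Matrix n n ℂ).toSesqForm x x = 0) :
    (Finset.univ.filter fun i => hA.eigenvalues i < 0).card + finrank ℂ W ≤ Fintype.card n := by
  let u : {i // hA.eigenvalues i < 0} → n → ℂ := fun i k => (hA.eigenvectorBasis i k : ℂ)
  have key := LinearMap.IsOrthoᵢ.card_add_finrank_le (B := -(A.map (↑) : Matrix n n ℂ).toSesqForm)
    (u := u) (W := W) (fun i j hij => ?_) (fun i => ?_) (fun x hx => by simp [hW x hx])
  · simpa [Fintype.card_subtype] using key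
  · show _ = 0
    simp [u, toSesqForm_map_ofReal_apply_ofReal, hA.dotProduct_mulVec_eigenvectorBasis,
      Subtype.val_injective.ne hij]
  · simpa [u, toSesqForm_map_ofReal_apply_ofReal, hA.dotProduct_mulVec_eigenvectorBasis,
      ← Complex.ofReal_neg] using neg_pos.2 i.2

end IsHermitian

end Matrix

theorem Jmat_transpose (m : ℕ) : (Jmat m)ᵀ = -Jmat m := by
  simp [Jmat, fromBlocks_transpose, fromBlocks_neg]

/-- If `A` is a real symmetric invertible `2m × 2m` matrix such that
`𝕁_m A` is hyperbolic, then `A` has signature `(m, m)`: counted with multiplicity, `A` has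
exactly `m` positive and exactly `m` negative eigenvalues. -/
theorem stmt_8 (m : ℕ) (A : Matrix (Fin m ⊕ Fin m) (Fin m ⊕ Fin m) ℝ)
    (hA : A.IsHermitian) (hAinv : IsUnit A)
    (hhyp : (Jmat m * A).Hyperbolic) :
    (Finset.univ.filter fun i => 0 < hA.eigenvalues i).card = m ∧
    (Finset.univ.filter fun i => hA.eigenvalues i < 0).card = m := by
  set B := (A.map (↑) : Matrix _ _ ℂ).toSesqForm
  set f : End ℂ (Fin m ⊕ Fin m → ℂ) := toLin' ((Jmat m * A).map (↑) : Matrix _ _ ℂ)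
  set Eneg := ⨆ μ ∈ {μ : ℂ | μ.re < 0}, f.maxGenEigenspace μ
  set Epos := ⨆ μ ∈ {μ : ℂ | 0 < μ.re}, f.maxGenEigenspace μ
  have hskew : A.IsSkewAdjoint (Jmat m * A) :=
    (isHermitian_iff_isSymm.1 hA).isSkewAdjoint_mul (Jmat_transpose m)
  have hf : B.IsAdjointPair B f (-f) := hskew.isAdjointPair_toSesqForm_map_ofReal
  have hsplit : Fintype.card (Fin m ⊕ Fin m) ≤ finrank ℂ Eneg + finrank ℂ Epos := by
    have := Submodule.finrank_add_le_finrank_add_finrank Eneg Epos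
    rwa [End.biSup_maxGenEigenspace_re_neg_sup_re_pos_eq_top fun μ => hhyp.re_ne_zero,
      finrank_top, finrank_fintype_fun_eq_card] at this
  have hiso : ∀ s : Set ℂ, (∀ μ ∈ s, ∀ ν ∈ s, μ.re + ν.re ≠ 0) →
      ∀ x ∈ ⨆ μ ∈ s, f.maxGenEigenspace μ, B x x = 0 := fun s hs x hx =>
    hf.apply_eq_zero_of_mem_biSup_maxGenEigenspace
      (fun μ hμ ν hν h => hs μ hμ ν hν (by simpa using congrArg Complex.re h)) hx hx
  have hEneg : ∀ x ∈ Eneg, B x x = 0 := hiso _ fun μ hμ ν hν => (add_neg hμ hν).ne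
  have hEpos : ∀ x ∈ Epos, B x x = 0 := hiso _ fun μ hμ ν hν => (add_pos hμ hν).ne'
  have hn : Fintype.card (Fin m ⊕ Fin m) = m + m := by simp
  have hsum := hA.card_filter_pos_add_card_filter_neg hAinv
  have hpos_neg := hA.card_filter_pos_add_finrank_le hEneg
  have hpos_pos := hA.card_filter_pos_add_finrank_le hEpos
  have hneg_neg := hA.card_filter_neg_add_finrank_le hEneg
  have hneg_pos := hA.card_filter_neg_add_finrank_le hEpos
  omega
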